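/- Let ℍ denote the real quaternions, f ∈ ℍ[x] a nonzero polynomial of degree n with leading coefficient c. Then f decomposes into linear factors f = c·(x − λₙ)·(x − λ_{n−1})⋯(x − λ₁) for some λ₁, …, λₙ ∈ ℍ if and only if there exist γ₁, …, γₙ ∈ ℍ such that the companion polynomial decomposes as C_f = f̄·f = Norm(c)·∏_{k=1}^{n}(x² − Tr(γₖ)x + Norm(γₖ)) in ℍ[x]; moreover, in that case the λₖ can be chosen so that each λₖ has the same trace and norm as γₖ (i.e., λₖ lies in the conjugacy class of γₖ). -/

import Mathlib

open Polynomial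

/-- The conjugate polynomial: apply quaternion conjugation (`star`)
coefficient-wise. -/
noncomputable def polyConj (f : (Quaternion ℝ)[X]) : (Quaternion ℝ)[X] :=
  f.sum fun i a => C (star a) * X ^ i

/-- The ordered product `c·(x - λₙ)·(x - λ_{n-1})⋯(x - λ₁)` (indices `1,…,n`,
taken in descending order, all products associated to the left as written). -/
noncomputable def linearFactorization (c : Quaternion ℝ) (n : ℕ)
    (lam : ℕ → Quaternion ℝ) : (Quaternion ℝ)[X] :=
  C c * ((List.range n).reverse.map fun k => X - C (lam (k + 1))).prod

/-- The product `Norm(c) · ∏_{k=1}^{n} (x² - Tr(γₖ)·x + Norm(γₖ))`; each factor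
has central (real) coefficients, so the product is order-independent. -/
noncomputable def quadraticFactorization (c : Quaternion ℝ) (n : ℕ)
    (γ : ℕ → Quaternion ℝ) : (Quaternion ℝ)[X] :=
  C (star c * c) *
    ((List.range n).map fun k =>
      X ^ 2 - C (γ (k + 1) + star (γ (k + 1))) * X +
        C (star (γ (k + 1)) * γ (k + 1))).prod

/-! `f ↦ f̄ f` is multiplicative: `f̄ f` is fixed by conjugation, so it has real coefficients
and is central. This gives the forward direction. Conversely, if `q = x² - Tr(γ) x + Norm(γ)`
divides `f̄ f`, write `f = q h + r` with `deg r ≤ 1`; as `q` is real, `q` divides `r̄ r`. Degree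
counting forces `r = a (x - λ)` with `a ≠ 0` (or `r = 0`), and then `r̄ r = Norm(a) (x - λ̄)(x - λ)`
gives `(x - λ̄)(x - λ) = q`, i.e. `λ` is conjugate to `γ`, and `f = (h (x - λ̄) + a)(x - λ)`.
Peeling off one linear factor at a time proves the converse. -/

section

local notation "ℍ" => Quaternion ℝ

lemma coeff_polyConj (f : ℍ[X]) (k : ℕ) : (polyConj f).coeff k = star (f.coeff k) := by
  rw [polyConj, coeff_sum, Polynomial.sum_def]
  simp only [coeff_C_mul, coeff_X_pow, mul_ite, mul_one, mul_zero, Finset.sum_ite_eq]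
  split_ifs with h
  · rfl
  · rw [Polynomial.notMem_support_iff.mp h, star_zero]

lemma polyConj_C (a : ℍ) : polyConj (C a) = C (star a) := by
  ext k : 1
  simp [coeff_polyConj, coeff_C, apply_ite star]

lemma polyConj_X_sub_C (a : ℍ) : polyConj (X - C a) = X - C (star a) := by
  ext k : 1
  simp [coeff_polyConj, coeff_X, coeff_C, apply_ite star]

lemma polyConj_add (p q : ℍ[X]) : polyConj (p + q) = polyConj p + polyConj q := by
  ext k : 1
  simp [coeff_polyConj]

lemma polyConj_mul (p q : ℍ[X]) : polyConj (p * q) = polyConj q * polyConj p := by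
  ext k : 1
  rw [coeff_polyConj, coeff_mul, coeff_mul, star_sum,
    ← Finset.HasAntidiagonal.map_swap_antidiagonal, Finset.sum_map]
  simp [coeff_polyConj]

lemma polyConj_polyConj (p : ℍ[X]) : polyConj (polyConj p) = p := by
  ext k : 1
  simp [coeff_polyConj]

lemma commute_of_polyConj_eq_self {p : ℍ[X]} (hp : polyConj p = p) (q : ℍ[X]) :
    Commute p q := by
  have hcentral (k : ℕ) (a : ℍ) : Commute (p.coeff k) a := by
    have hreal : p.coeff k = ((p.coeff k).re : ℍ) := by
      rw [← Quaternion.star_eq_self, ← coeff_polyConj, hp]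
    rw [hreal]
    exact Quaternion.coe_commute _ a
  ext k : 1
  rw [coeff_mul, coeff_mul]
  conv_rhs => rw [← Finset.HasAntidiagonal.map_swap_antidiagonal, Finset.sum_map]
  refine Finset.sum_congr rfl fun x _ => ?_
  exact (hcentral x.1 (q.coeff x.2)).eq

noncomputable def companion (f : ℍ[X]) : ℍ[X] := polyConj f * f

lemma polyConj_companion (p : ℍ[X]) : polyConj (companion p) = companion p := by
  rw [companion, polyConj_mul, polyConj_polyConj]

lemma commute_companion (p q : ℍ[X]) : Commute (companion p) q :=
  commute_of_polyConj_eq_self (polyConj_companion p) q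

lemma companion_mul (p q : ℍ[X]) : companion (p * q) = companion p * companion q := by
  calc companion (p * q) = polyConj q * companion p * q := by
        rw [companion, companion, polyConj_mul, mul_assoc, mul_assoc, mul_assoc]
    _ = companion p * companion q := by
        rw [← (commute_companion p _).eq, mul_assoc]
        rfl

lemma companion_C (a : ℍ) : companion (C a) = C (star a * a) := by
  rw [companion, polyConj_C, C_mul]

lemma companion_X_sub_C (γ : ℍ) :
    companion (X - C γ) = X ^ 2 - C (γ + star γ) * X + C (star γ * γ) := by
  simp only [companion, polyConj_X_sub_C, C_add, C_mul, sub_mul, mul_sub, add_mul, sq]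
  rw [X_mul (p := C γ)]
  abel

lemma monic_companion_X_sub_C (γ : ℍ) : (companion (X - C γ)).Monic := by
  rw [companion, polyConj_X_sub_C]
  exact (monic_X_sub_C _).mul (monic_X_sub_C _)

lemma natDegree_companion_X_sub_C (γ : ℍ) : (companion (X - C γ)).natDegree = 2 := by
  rw [companion, polyConj_X_sub_C, (monic_X_sub_C _).natDegree_mul (monic_X_sub_C _),
    natDegree_X_sub_C, natDegree_X_sub_C]

lemma companion_X_sub_C_eq_iff (μ γ : ℍ) :
    companion (X - C μ) = companion (X - C γ) ↔
      μ + star μ = γ + star γ ∧ star μ * μ = star γ * γ := by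
  rw [companion_X_sub_C, companion_X_sub_C]
  refine ⟨fun h => ⟨?_, ?_⟩, fun ⟨htr, hnorm⟩ => by rw [htr, hnorm]⟩
  · have h1 := congrArg (coeff · 1) h
    simp only [coeff_add, coeff_sub, coeff_X_pow, coeff_C_mul_X, coeff_C] at h1
    simpa [← neg_add_rev, add_comm] using h1
  · simpa [coeff_X, coeff_X_pow] using congrArg (coeff · 0) h

lemma dvd_companion_mul_add_iff {q : ℍ[X]} (hq : polyConj q = q) (h r : ℍ[X]) :
    q ∣ companion (q * h + r) ↔ q ∣ companion r := by
  have hexpand : companion (q * h + r) =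
      q * (polyConj h * q * h + polyConj h * r + polyConj r * h) + companion r := by
    rw [companion, companion, polyConj_add, polyConj_mul, hq]
    generalize polyConj h = h' at *
    generalize polyConj r = r' at *
    have hh' := (commute_of_polyConj_eq_self hq h').eq
    have hr' := (commute_of_polyConj_eq_self hq r').eq
    calc (h' * q + r') * (q * h + r) = h' * q * q * h + h' * q * r + r' * q * h + r' * r := by
          noncomm_ring
      _ = q * h' * q * h + q * h' * r + q * r' * h + r' * r := by rw [hh', hr']
      _ = q * (h' * q * h + h' * r + r' * h) + r' * r := by noncomm_ring
  rw [hexpand]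
  exact dvd_add_right (dvd_mul_right _ _)

lemma exists_eq_C_mul_X_sub_C_of_dvd_companion {r : ℍ[X]} (hr : r.natDegree ≤ 1) {γ : ℍ}
    (hdvd : companion (X - C γ) ∣ companion r) :
    ∃ a μ, r = C a * (X - C μ) ∧ companion (X - C μ) = companion (X - C γ) := by
  obtain ⟨a, b, rfl⟩ : ∃ a b, r = C a * X + C b := ⟨_, _, eq_X_add_C_of_natDegree_le_one hr⟩
  rcases eq_or_ne a 0 with rfl | ha
  · rcases eq_or_ne b 0 with rfl | hb
    · exact ⟨0, γ, by simp, rfl⟩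
    · rw [C_0, zero_mul, zero_add, companion_C] at hdvd
      have := natDegree_le_of_dvd hdvd (C_ne_zero.mpr (mul_ne_zero (star_ne_zero.mpr hb) hb))
      rw [natDegree_C, natDegree_companion_X_sub_C] at this
      omega
  · set μ := -(a⁻¹ * b)
    have hr : C a * X + C b = C a * (X - C μ) := by
      rw [mul_sub, ← C_mul, mul_neg, mul_inv_cancel_left₀ ha, C_neg, sub_neg_eq_add]
    have hunit : IsUnit (companion (C a)) := by
      rw [companion_C]
      exact isUnit_C.mpr (mul_ne_zero (star_ne_zero.mpr ha) ha).isUnit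
    rw [hr, companion_mul, (commute_companion _ _).eq, hunit.dvd_mul_right] at hdvd
    refine ⟨a, μ, hr, eq_of_monic_of_dvd_of_natDegree_le (monic_companion_X_sub_C γ)
      (monic_companion_X_sub_C μ) hdvd ?_⟩
    rw [natDegree_companion_X_sub_C, natDegree_companion_X_sub_C]

lemma exists_eq_mul_X_sub_C_of_dvd_companion (f : ℍ[X]) {γ : ℍ}
    (hdvd : companion (X - C γ) ∣ companion f) :
    ∃ g μ, f = g * (X - C μ) ∧ companion (X - C μ) = companion (X - C γ) := by
  have hq := monic_companion_X_sub_C γ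
  obtain ⟨h, r, hr, rfl⟩ : ∃ h r, r.natDegree ≤ 1 ∧ f = companion (X - C γ) * h + r := by
    refine ⟨f /ₘ companion (X - C γ), f %ₘ companion (X - C γ), ?_,
      by rw [add_comm, modByMonic_add_div]⟩
    have := natDegree_modByMonic_lt f hq
      (ne_of_apply_ne natDegree (by simp [natDegree_companion_X_sub_C]))
    rw [natDegree_companion_X_sub_C] at this
    omega
  rw [dvd_companion_mul_add_iff (polyConj_companion _)] at hdvd
  obtain ⟨a, μ, rfl, hμ⟩ := exists_eq_C_mul_X_sub_C_of_dvd_companion hr hdvd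
  refine ⟨h * (X - C (star μ)) + C a, μ, ?_, hμ⟩
  rw [(commute_companion _ _).eq, ← hμ, companion, polyConj_X_sub_C]
  noncomm_ring

lemma linearFactorization_succ (c : ℍ) (n : ℕ) (lam : ℕ → ℍ) :
    linearFactorization c (n + 1) lam =
      linearFactorization c n (fun k => lam (k + 1)) * (X - C (lam 1)) := by
  rw [linearFactorization, linearFactorization, List.range_succ_eq_map, List.reverse_cons,
    List.map_append, List.prod_append, List.map_reverse, List.map_map, ← List.map_reverse]
  simp only [List.map_cons, List.map_nil, List.prod_cons, List.prod_nil, mul_one,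
    Function.comp_def, mul_assoc]

lemma linearFactorization_congr (c : ℍ) (n : ℕ) {α β : ℕ → ℍ}
    (h : ∀ k ∈ Finset.Icc 1 n, α k = β k) :
    linearFactorization c n α = linearFactorization c n β := by
  rw [linearFactorization, linearFactorization]
  congr 2
  refine List.map_congr_left fun k hk => ?_
  rw [List.mem_reverse, List.mem_range] at hk
  rw [h (k + 1) (Finset.mem_Icc.mpr ⟨by omega, by omega⟩)]

lemma quadraticFactorization_succ (c : ℍ) (n : ℕ) (γ : ℕ → ℍ) :
    quadraticFactorization c (n + 1) γ =
      quadraticFactorization c n (fun k => γ (k + 1)) * companion (X - C (γ 1)) := by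
  rw [quadraticFactorization, quadraticFactorization, List.range_succ_eq_map, List.map_cons,
    List.prod_cons, List.map_map, ← companion_X_sub_C, (commute_companion _ _).eq, mul_assoc]
  rfl

lemma companion_linearFactorization (c : ℍ) (n : ℕ) (lam : ℕ → ℍ) :
    companion (linearFactorization c n lam) = quadraticFactorization c n lam := by
  induction n generalizing lam with
  | zero => simp [linearFactorization, quadraticFactorization, companion_C]
  | succ n ih => rw [linearFactorization_succ, companion_mul, ih, quadraticFactorization_succ]

lemma exists_linearFactorization_of_companion_eq {f : ℍ[X]} {n : ℕ} (hn : f.natDegree = n)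
    {γ : ℕ → ℍ} (hγ : companion f = quadraticFactorization f.leadingCoeff n γ) :
    ∃ lam : ℕ → ℍ, f = linearFactorization f.leadingCoeff n lam ∧
      ∀ k ∈ Finset.Icc 1 n, companion (X - C (lam k)) = companion (X - C (γ k)) := by
  induction n generalizing f γ with
  | zero =>
    refine ⟨γ, ?_, by simp⟩
    simpa [linearFactorization, leadingCoeff, hn] using eq_C_of_natDegree_eq_zero hn
  | succ n ih =>
    rw [quadraticFactorization_succ] at hγ
    have hdvd : companion (X - C (γ 1)) ∣ companion f :=
      ⟨_, hγ.trans (commute_companion _ _).symm.eq⟩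
    obtain ⟨g, μ, rfl, hμ⟩ := exists_eq_mul_X_sub_C_of_dvd_companion f hdvd
    have hg : g ≠ 0 := by
      rintro rfl
      simp at hn
    have hlc : (g * (X - C μ)).leadingCoeff = g.leadingCoeff :=
      leadingCoeff_mul_monic (monic_X_sub_C μ)
    rw [natDegree_mul hg (X_sub_C_ne_zero μ), natDegree_X_sub_C, Nat.add_right_cancel_iff] at hn
    rw [companion_mul, hμ, hlc] at hγ
    obtain ⟨lam, hg_eq, hlam⟩ :=
      ih hn (mul_right_cancel₀ (monic_companion_X_sub_C _).ne_zero hγ)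
    refine ⟨fun k => if k = 1 then μ else lam (k - 1), ?_, fun k hk => ?_⟩
    · rw [hlc, linearFactorization_succ, if_pos rfl]
      refine congrArg (· * (X - C μ)) (hg_eq.trans (linearFactorization_congr _ _ fun k hk => ?_))
      rw [Finset.mem_Icc] at hk
      simp [show k ≠ 0 by omega]
    · rcases eq_or_ne k 1 with rfl | hk1
      · simpa using hμ
      · rw [Finset.mem_Icc] at hk
        simpa [hk1, show k - 1 + 1 = k by omega] using
          hlam (k - 1) (Finset.mem_Icc.mpr ⟨by omega, by omega⟩)

end

theorem factorization_iff_companion_factors_general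
    (f : (Quaternion ℝ)[X]) (n : ℕ) (hn : f.natDegree = n) :
    ((∃ lam : ℕ → Quaternion ℝ,
        f = linearFactorization f.leadingCoeff n lam) ↔
      (∃ γ : ℕ → Quaternion ℝ,
        polyConj f * f = quadraticFactorization f.leadingCoeff n γ)) ∧
    (∀ γ : ℕ → Quaternion ℝ,
      polyConj f * f = quadraticFactorization f.leadingCoeff n γ →
      ∃ lam : ℕ → Quaternion ℝ,
        f = linearFactorization f.leadingCoeff n lam ∧
        ∀ k ∈ Finset.Icc 1 n,
          lam k + star (lam k) = γ k + star (γ k) ∧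
          star (lam k) * lam k = star (γ k) * γ k) := by
  have factor (γ) (hγ : companion f = quadraticFactorization f.leadingCoeff n γ) :=
    exists_linearFactorization_of_companion_eq hn hγ
  refine ⟨⟨fun ⟨lam, hlam⟩ => ⟨lam, ?_⟩, fun ⟨γ, hγ⟩ => ?_⟩, fun γ hγ => ?_⟩
  · rw [← companion_linearFactorization, ← hlam]
    rfl
  · obtain ⟨lam, hlam, -⟩ := factor γ hγ
    exact ⟨lam, hlam⟩
  · obtain ⟨lam, hlam, hconj⟩ := factor γ hγ
    exact ⟨lam, hlam, fun k hk => (companion_X_sub_C_eq_iff _ _).mp (hconj k hk)⟩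

/-- a nonzero quaternion polynomial `f` of degree `n` with
leading coefficient `c` factors into linear factors
`f = c·(x - λₙ)⋯(x - λ₁)` iff its companion polynomial `C_f = f̄·f` factors as
`Norm(c)·∏_{k=1}^{n}(x² - Tr(γₖ)x + Norm(γₖ))`; moreover, in that case the
`λₖ` can be chosen with the same trace and norm as `γₖ` (i.e., in the
conjugacy class of `γₖ`). -/
theorem factorization_iff_companion_factors
    (f : (Quaternion ℝ)[X]) (hf : f ≠ 0) (n : ℕ) (hn : f.natDegree = n) :
    ((∃ lam : ℕ → Quaternion ℝ,
        f = linearFactorization f.leadingCoeff n lam) ↔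
      (∃ γ : ℕ → Quaternion ℝ,
        polyConj f * f = quadraticFactorization f.leadingCoeff n γ)) ∧
    (∀ γ : ℕ → Quaternion ℝ,
      polyConj f * f = quadraticFactorization f.leadingCoeff n γ →
      ∃ lam : ℕ → Quaternion ℝ,
        f = linearFactorization f.leadingCoeff n lam ∧
        ∀ k ∈ Finset.Icc 1 n,
          lam k + star (lam k) = γ k + star (γ k) ∧
          star (lam k) * lam k = star (γ k) * γ k) :=
  factorization_iff_companion_factors_general f n hn
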